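/- arXiv:1807.04831 — 2 statements merged into one kernel-verified Lean document; each statement's English description precedes it below -/
import Mathlib

section
/- For every i ≥ 2, all six bottleneck points of stage i of the U fractal belong to the stage u_i; that is, B_i^U ⊆ u_i. -/
/-- A point of the integer lattice `ℤ²`. -/
abbrev Pt := ℤ × ℤ

/-- The generator of the U fractal. -/
def GU : Set Pt := {(0,0),(0,1),(0,2),(1,0),(2,0),(2,1),(2,2)}

/-- `scaleAddU k A B = A + k·B` (componentwise). -/
def scaleAddU (k : ℤ) (A B : Set Pt) : Set Pt :=
  {q | ∃ p ∈ A, ∃ g ∈ B, q = (p.1 + k * g.1, p.2 + k * g.2)}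

/-- The stages of the U fractal: `ustage 1 = GU` and
`ustage (i+1) = ustage i + 3^i · GU` for `i ≥ 1`. -/
def ustage : ℕ → Set Pt
  | 0 => ∅
  | 1 => GU
  | n + 2 => scaleAddU (3 ^ (n + 1)) (ustage (n + 1)) GU

/-- The U fractal `𝐔 = ⋃_{i ≥ 1} u_i`. -/
def UFractal : Set Pt := {p | ∃ i : ℕ, 1 ≤ i ∧ p ∈ ustage i}

/-- The base bottleneck offsets. -/
def B0 : Set Pt := {(0,0),(0,1),(0,2),(2,0),(2,1),(2,2)}

/-- The six bottleneck points of stage `u_i` of the U fractal (for `i ≥ 2`). -/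
def BU (i : ℕ) : Set Pt :=
  {q | ∃ b ∈ B0,
    q = (3 ^ (i - 1) + ((3 : ℤ) ^ (i - 2) - 1) / 2 + 3 ^ (i - 2) * b.1,
         3 ^ (i - 2) * b.2)}

lemma half_pow_succ (n : ℕ) :
    ((3:ℤ) ^ (n + 1) - 1) / 2 = ((3:ℤ) ^ n - 1) / 2 + 3 ^ n := by
  have h : (3:ℤ) ^ (n + 1) - 1 = (3 ^ n - 1) + 3 ^ n * 2 := by ring
  rw [h, Int.add_mul_ediv_right _ _ (by norm_num : (2:ℤ) ≠ 0)]

lemma aux_mem : ∀ n : ℕ, ∀ p ∈ GU,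
    ((((3:ℤ) ^ n - 1) / 2 + 3 ^ n * p.1, (3:ℤ) ^ n * p.2)) ∈ ustage (n + 1) := by
  intro n
  induction n with
  | zero =>
    intro p hp
    simpa [ustage, Prod.ext_iff] using hp
  | succ n ih =>
    intro p hp
    show _ ∈ scaleAddU (3 ^ (n + 1)) (ustage (n + 1)) GU
    refine ⟨(((3:ℤ) ^ n - 1) / 2 + 3 ^ n * 1, (3:ℤ) ^ n * 0),
      ih (1, 0) (by simp [GU]), p, hp, ?_⟩
    simp only [Prod.ext_iff, half_pow_succ]
    constructor <;> ring

/-- For every `i ≥ 2`, all six bottleneck points of stage `i`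
of the U fractal belong to `u_i`. -/
theorem bottlenecks_mem_ustage : ∀ i : ℕ, 2 ≤ i → BU i ⊆ ustage i := by
  intro i hi q hq
  obtain ⟨n, rfl⟩ : ∃ n, i = n + 2 := ⟨i - 2, by omega⟩
  obtain ⟨b, hb, rfl⟩ := hq
  have hbGU : b ∈ GU := by
    revert hb; simp [B0, GU]; tauto
  show _ ∈ scaleAddU (3 ^ (n + 1)) (ustage (n + 1)) GU
  refine ⟨(((3:ℤ) ^ n - 1) / 2 + 3 ^ n * b.1, (3:ℤ) ^ n * b.2),
    aux_mem n b hbGU, (1, 0), by simp [GU], ?_⟩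
  simp only [show n + 2 - 1 = n + 1 from rfl, show n + 2 - 2 = n from rfl,
    Prod.ext_iff, pow_succ]
  constructor <;> ring
end

section
/- For all integers j, k with 3 ≤ j < k, let b_j and b_k denote the bottom-left bottleneck points of u_j and u_k respectively, i.e. b_q = (3^{q-1} + (3^{q-2}−1)/2, 0). For every grid path p_0, p_1, …, p_n in the U fractal 𝐔 such that p_0 = b_j, each of p_1, …, p_n lies in the left-middle of u_j, and the second coordinate of p_n is at least 3^{j-2} (the height of the middle-left bottleneck point of u_j), there exists an index l ≤ n such that p_l + b_k − b_j ∉ 𝐔. -/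
/-- Two points are grid-adjacent when their `ℓ¹` distance is `1`. -/
def adjPt (p q : Pt) : Prop := |p.1 - q.1| + |p.2 - q.2| = 1

/-- The bottom-left bottleneck point of stage `u_q` of the U fractal (for `q ≥ 2`). -/
def bU (q : ℕ) : Pt :=
  (3 ^ (q - 1) + ((3 : ℤ) ^ (q - 2) - 1) / 2, 0)

/-- The left-middle of stage `u_i`. -/
def leftMidU (i : ℕ) : Set Pt :=
  {p ∈ ustage i |
    3 ^ (i - 1) + ((3 : ℤ) ^ (i - 2) - 1) / 2 < p.1 ∧ p.1 < ((3 : ℤ) ^ i - 1) / 2}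

private def cU (s : ℕ) : ℤ := ((3 : ℤ) ^ s - 1) / 2

private lemma two_dvd_pow_sub_one (s : ℕ) : (2 : ℤ) ∣ 3 ^ s - 1 := by
  induction s with
  | zero => norm_num
  | succ n ih =>
      have h : (3 : ℤ) ^ (n + 1) - 1 = 3 * (3 ^ n - 1) + 2 := by ring
      rw [h]
      exact dvd_add (Dvd.dvd.mul_left ih 3) (by norm_num)

private lemma two_mul_cU (s : ℕ) : 2 * cU s = 3 ^ s - 1 := by
  exact Int.mul_ediv_cancel' (two_dvd_pow_sub_one s)

private lemma one_le_pow3 (s : ℕ) : (1 : ℤ) ≤ 3 ^ s := one_le_pow₀ (by norm_num)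

private lemma pow3_succ (s : ℕ) : (3 : ℤ) ^ (s + 1) = 3 * 3 ^ s := by ring

private lemma pow3_le (a b : ℕ) (h : a ≤ b) : (3 : ℤ) ^ a ≤ 3 ^ b :=
  pow_le_pow_right₀ (by norm_num) h

private lemma pow3_lt (a b : ℕ) (h : a < b) : (3 : ℤ) ^ a < 3 ^ b :=
  pow_lt_pow_right₀ (by norm_num) h

private lemma cU_succ (s : ℕ) : cU (s + 1) = 3 ^ s + cU s := by
  have h1 := two_mul_cU (s + 1)
  have h2 := two_mul_cU s
  have h3 := pow3_succ s
  omega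

private lemma cU_mono {a b : ℕ} (h : a ≤ b) : cU a ≤ cU b := by
  have h1 := two_mul_cU a
  have h2 := two_mul_cU b
  have h3 := pow3_le a b h
  omega

private lemma cU_nonneg (s : ℕ) : 0 ≤ cU s := by
  have h1 := two_mul_cU s
  have h2 := one_le_pow3 s
  omega

private lemma gu_bound {g : Pt} (hg : g ∈ GU) :
    0 ≤ g.1 ∧ g.1 ≤ 2 ∧ 0 ≤ g.2 ∧ g.2 ≤ 2 := by
  simp only [GU, Set.mem_insert_iff, Set.mem_singleton_iff] at hg
  rcases hg with rfl | rfl | rfl | rfl | rfl | rfl | rfl <;> norm_num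

private lemma ustage_box : ∀ (i : ℕ) (p : Pt), p ∈ ustage i →
    0 ≤ p.1 ∧ p.1 < 3 ^ i ∧ 0 ≤ p.2 ∧ p.2 < 3 ^ i := by
  intro i
  induction i with
  | zero => intro p hp; simp [ustage] at hp
  | succ n ih =>
    intro p hp
    match n, ih, hp with
    | 0, _, hp =>
        have hb := gu_bound (show p ∈ GU from hp)
        norm_num
        omega
    | m + 1, ih, hp =>
        obtain ⟨q, hq, g, hg, rfl⟩ := hp
        have hb := ih q hq
        have hgb := gu_bound hg
        have hp3 : (0 : ℤ) < 3 ^ (m + 1) := by have := one_le_pow3 (m + 1); omega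
        have hmul1 : 3 ^ (m + 1) * g.1 ≤ 3 ^ (m + 1) * 2 :=
          mul_le_mul_of_nonneg_left hgb.2.1 hp3.le
        have hmul1' : 0 ≤ 3 ^ (m + 1) * g.1 := mul_nonneg hp3.le hgb.1
        have hmul2 : 3 ^ (m + 1) * g.2 ≤ 3 ^ (m + 1) * 2 :=
          mul_le_mul_of_nonneg_left hgb.2.2.2 hp3.le
        have hmul2' : 0 ≤ 3 ^ (m + 1) * g.2 := mul_nonneg hp3.le hgb.2.2.1
        have h3 := pow3_succ (m + 1)
        simp only
        omega

private lemma ustage_box' (i : ℕ) (x y : ℤ) (h : ((x, y) : Pt) ∈ ustage i) :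
    0 ≤ x ∧ x < 3 ^ i ∧ 0 ≤ y ∧ y < 3 ^ i := by
  simpa using ustage_box i (x, y) h

private lemma ustage_peel (n : ℕ) (x y : ℤ) (hp : ((x, y) : Pt) ∈ ustage (n + 2))
    (h1 : x < 3 ^ (n + 1)) (h2 : y < 3 ^ (n + 1)) : ((x, y) : Pt) ∈ ustage (n + 1) := by
  obtain ⟨q, hq, g, hg, hEq⟩ := hp
  rw [Prod.mk.injEq] at hEq
  obtain ⟨hx, hy⟩ := hEq
  have hb := ustage_box _ q hq
  have hp3 : (0 : ℤ) < 3 ^ (n + 1) := by have := one_le_pow3 (n + 1); omega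
  simp only [GU, Set.mem_insert_iff, Set.mem_singleton_iff] at hg
  rcases hg with rfl | rfl | rfl | rfl | rfl | rfl | rfl <;>
    simp only at hx hy <;>
    [skip; omega; omega; omega; omega; omega; omega] <;>
  · have : ((x, y) : Pt) = q := by rw [Prod.ext_iff]; constructor <;> simp <;> omega
    rw [this]; exact hq

private lemma ustage_strip (n : ℕ) (x y : ℤ) (hp : ((x, y) : Pt) ∈ ustage (n + 2))
    (h1 : 3 ^ (n + 1) ≤ x) (h2 : x < 2 * 3 ^ (n + 1)) :
    ((x - 3 ^ (n + 1), y) : Pt) ∈ ustage (n + 1) := by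
  obtain ⟨q, hq, g, hg, hEq⟩ := hp
  rw [Prod.mk.injEq] at hEq
  obtain ⟨hx, hy⟩ := hEq
  have hb := ustage_box _ q hq
  have hp3 : (0 : ℤ) < 3 ^ (n + 1) := by have := one_le_pow3 (n + 1); omega
  simp only [GU, Set.mem_insert_iff, Set.mem_singleton_iff] at hg
  rcases hg with rfl | rfl | rfl | rfl | rfl | rfl | rfl <;>
    simp only at hx hy <;>
    [omega; omega; omega; skip; omega; omega; omega] <;>
  · have : ((x - 3 ^ (n + 1), y) : Pt) = q := by
      rw [Prod.ext_iff]; constructor <;> simp <;> omega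
    rw [this]; exact hq

private lemma keyL (s : ℕ) (t : ℤ) (hs : 1 ≤ s) (ht1 : 1 ≤ t) (ht2 : t ≤ cU s) :
    ∀ r, s + 1 ≤ r → ((cU r + t, (3 : ℤ) ^ s) : Pt) ∉ ustage r := by
  intro r
  induction r with
  | zero => intro h; omega
  | succ m ih =>
    intro hm hmem
    obtain ⟨i, rfl⟩ : ∃ i, m = i + 1 := ⟨m - 1, by omega⟩
    have hc2 := cU_succ (i + 1)
    have h2c := two_mul_cU (i + 1)
    have hcs : cU s ≤ cU (i + 1) := cU_mono (by omega)
    have hstr := ustage_strip i _ _ hmem (by omega) (by omega)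
    have he : cU (i + 1 + 1) + t - 3 ^ (i + 1) = cU (i + 1) + t := by omega
    rw [he] at hstr
    by_cases hcase : s + 1 ≤ i + 1
    · exact ih hcase hstr
    · have hieq : i + 1 = s := by omega
      have hb := ustage_box' _ _ _ hstr
      rw [hieq] at hb
      omega

private lemma ustage_descend (x y : ℤ) (m d : ℕ) (hm : 1 ≤ m)
    (h1 : x < 3 ^ m) (h2 : y < 3 ^ m)
    (hp : ((x, y) : Pt) ∈ ustage (m + d)) : ((x, y) : Pt) ∈ ustage m := by
  induction d with
  | zero => exact hp
  | succ e ih =>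
    apply ih
    obtain ⟨w, rfl⟩ : ∃ w, m = w + 1 := ⟨m - 1, by omega⟩
    have heq : w + 1 + (e + 1) = w + e + 2 := by omega
    rw [heq] at hp
    have hle : (3 : ℤ) ^ (w + 1) ≤ 3 ^ (w + e + 1) := pow3_le _ _ (by omega)
    have := ustage_peel (w + e) x y hp (by omega) (by omega)
    have heq2 : w + e + 1 = w + 1 + e := by omega
    rwa [heq2] at this

private lemma keyOut (s u : ℕ) (t : ℤ) (hs : 1 ≤ s) (hsu : s + 1 ≤ u)
    (ht1 : 1 ≤ t) (ht2 : t ≤ cU s) :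
    (((3 : ℤ) ^ (u + 1) + cU u + t, (3 : ℤ) ^ s) : Pt) ∉ UFractal := by
  rintro ⟨i, hi1, hi⟩
  have h2cu := two_mul_cU u
  have h2cs := two_mul_cU s
  have hcsu : cU s ≤ cU u := cU_mono (by omega)
  have hpsu : (3 : ℤ) ^ s < 3 ^ u := pow3_lt _ _ (by omega)
  have h3u1 := pow3_succ u
  have h3u2 : (3 : ℤ) ^ (u + 2) = 3 * 3 ^ (u + 1) := by ring
  have h1p := one_le_pow3 u
  -- i must be at least u + 2
  have hiu : u + 2 ≤ i := by
    by_contra hlt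
    have hb := ustage_box' i _ _ hi
    have : (3 : ℤ) ^ i ≤ 3 ^ (u + 1) := pow3_le _ _ (by omega)
    omega
  -- descend to stage u + 2
  have heqi : u + 2 + (i - (u + 2)) = i := by omega
  rw [← heqi] at hi
  have hA := ustage_descend _ _ (u + 2) (i - (u + 2)) (by omega)
    (by omega) (by omega) hi
  -- strip at stage u + 2
  have hB := ustage_strip u _ _ hA (by omega) (by omega)
  have he : (3 : ℤ) ^ (u + 1) + cU u + t - 3 ^ (u + 1) = cU u + t := by ring
  rw [he] at hB
  -- peel once at stage u + 1
  obtain ⟨v, rfl⟩ : ∃ v, u = v + 1 := ⟨u - 1, by omega⟩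
  have hC := ustage_peel v _ _ hB (by omega) (by omega)
  exact keyL s t hs ht1 ht2 (v + 1) (by omega) hC

private lemma discIVT (f : ℕ → ℤ) (n : ℕ) (H : ℤ)
    (hstep : ∀ l < n, |f (l + 1) - f l| ≤ 1) (h0 : f 0 ≤ H) (hn : H ≤ f n) :
    ∃ l ≤ n, f l = H := by
  induction n with
  | zero => exact ⟨0, le_refl 0, le_antisymm h0 hn⟩
  | succ m ih =>
    by_cases hc : H ≤ f m
    · obtain ⟨l, hl, he⟩ := ih (fun l hl => hstep l (by omega)) hc
      exact ⟨l, by omega, he⟩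
    · push_neg at hc
      have h1 := abs_le.mp (hstep m (by omega))
      exact ⟨m + 1, le_refl _, by omega⟩

/-- For `3 ≤ j < k`, every grid path in `𝐔` that starts at the
bottom-left bottleneck point `b_j` of `u_j`, stays in the left-middle of `u_j`, and
reaches a point with second coordinate at least `3^{j-2}` (the height of the
middle-left bottleneck point of `u_j`), has a point whose translate by
`b_k − b_j` lies outside `𝐔`. -/
theorem uFractal_bottom_left_growth_out_of_bounds :
    ∀ j k : ℕ, 3 ≤ j → j < k →
      ∀ (n : ℕ) (p : ℕ → Pt),
        (∀ l ≤ n, p l ∈ UFractal) →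
        (∀ l < n, adjPt (p l) (p (l + 1))) →
        p 0 = bU j →
        (∀ l, 1 ≤ l → l ≤ n → p l ∈ leftMidU j) →
        (3 : ℤ) ^ (j - 2) ≤ (p n).2 →
        ∃ l ≤ n, p l + bU k - bU j ∉ UFractal := by
  intro j k hj hjk n p _ hadj h0 hmid hend
  obtain ⟨s, rfl⟩ : ∃ s, j = s + 2 := ⟨j - 2, by omega⟩
  obtain ⟨u, rfl⟩ : ∃ u, k = u + 2 := ⟨k - 2, by omega⟩
  have hs : 1 ≤ s := by omega
  have hsu : s + 1 ≤ u := by omega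
  have hend' : (3 : ℤ) ^ s ≤ (p n).2 := by simpa using hend
  have h0y : (p 0).2 = 0 := by rw [h0]; rfl
  have hstep : ∀ l < n, |(p (l + 1)).2 - (p l).2| ≤ 1 := by
    intro l hl
    have ha := hadj l hl
    unfold adjPt at ha
    rw [abs_sub_comm]
    have := abs_nonneg ((p l).1 - (p (l + 1)).1)
    omega
  have hpos : (0 : ℤ) < 3 ^ s := by have := one_le_pow3 s; omega
  obtain ⟨l, hln, hly⟩ := discIVT (fun l => (p l).2) n ((3 : ℤ) ^ s) hstep
    (by show (p 0).2 ≤ 3 ^ s; rw [h0y]; exact hpos.le) hend'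
  have hl1 : 1 ≤ l := by
    rcases Nat.eq_zero_or_pos l with rfl | h
    · omega
    · omega
  have hmem := hmid l hl1 hln
  simp only [leftMidU, Set.mem_setOf_eq, Nat.add_sub_cancel] at hmem
  obtain ⟨hpl, hx1, hx2⟩ := hmem
  -- hpl : p l ∈ ustage (s+2), hx1 : 3^(s+1) + cU s < (p l).1, hx2 : (p l).1 < cU (s+2)
  have hx1' : 3 ^ (s + 1) + cU s < (p l).1 := hx1
  have hx2' : (p l).1 < cU (s + 2) := hx2
  have hcs2 : cU (s + 2) = 3 ^ (s + 1) + cU (s + 1) := cU_succ (s + 1)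
  have hcs1 : cU (s + 1) = 3 ^ s + cU s := cU_succ s
  have h2cs := two_mul_cU s
  have h2cs1 := two_mul_cU (s + 1)
  have hcnn := cU_nonneg s
  have h3s1 : (3 : ℤ) ^ (s + 1) = 3 * 3 ^ s := by ring
  -- rewrite p l as an explicit pair
  have hpl' : (((p l).1, (3 : ℤ) ^ s) : Pt) ∈ ustage (s + 2) := by
    rw [show (((p l).1, (3 : ℤ) ^ s) : Pt) = p l from by rw [Prod.ext_iff]; exact ⟨rfl, hly.symm⟩]
    exact hpl
  have hstrip0 := ustage_strip s _ _ hpl' (by omega) (by omega)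
  -- hstrip0 : ((p l).1 - 3^(s+1), 3^s) ∈ ustage (s+1)
  by_cases hcase : (p l).1 - 3 ^ (s + 1) ≤ 3 ^ s - 1
  · -- main case
    refine ⟨l, hln, ?_⟩
    set t : ℤ := (p l).1 - 3 ^ (s + 1) - cU s with htdef
    have hbUu : bU (u + 2) = (((3 : ℤ) ^ (u + 1) + cU u, 0) : Pt) := rfl
    have hbUs : bU (s + 2) = (((3 : ℤ) ^ (s + 1) + cU s, 0) : Pt) := rfl
    have hly' : (p l).2 = (3 : ℤ) ^ s := hly
    have hP : p l + bU (u + 2) - bU (s + 2) =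
        (((3 : ℤ) ^ (u + 1) + cU u + t, (3 : ℤ) ^ s) : Pt) := by
      rw [hbUu, hbUs, Prod.ext_iff]
      constructor
      · simp only [Prod.fst_add, Prod.fst_sub]
        omega
      · simp only [Prod.snd_add, Prod.snd_sub]
        omega
    rw [hP]
    exact keyOut s u t hs hsu (by omega) (by omega)
  · -- impossible case : x' ≥ 3^s
    exfalso
    obtain ⟨v, rfl⟩ : ∃ v, s = v + 1 := ⟨s - 1, by omega⟩
    have h2cv := two_mul_cU v
    have hcv1 : cU (v + 1) = 3 ^ v + cU v := cU_succ v
    have hstr2 := ustage_strip v _ _ hstrip0 (by omega) (by omega)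
    have hb := ustage_box' _ _ _ hstr2
    omega
end
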